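/- arXiv:0711.2704 — 2 statements merged into one kernel-verified Lean document; each statement's English description precedes it below -/
import Mathlib

section
/- Let Y be a simplicial complex and a, b vertices of Y such that (1) the graph lk_Y(a) ∩ lk_Y(b) is connected, and (2) there exists a vertex d with {a,b,d} a 2-face of Y. Then for any vertex c of lk_Y(a) ∩ lk_Y(b), the 3-cycle with edges {a,b}, {a,c}, {b,c} bounds an embedded disk in Y; in particular this 3-cycle is null-homotopic in Y. -/
open Finset MeasureTheory
open scoped ENNReal

/-! ### Abstract simplicial complexes (dimension ≤ 2 in applications) -/

/-- An abstract simplicial complex on the vertex type `V`, given by its set of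
(nonempty, finite) faces, closed under passing to nonempty subsets. -/
structure SComplex (V : Type) where
  faces : Set (Finset V)
  nonempty_of_mem : ∀ s ∈ faces, s.Nonempty
  down_closed : ∀ s ∈ faces, ∀ t, t ⊆ s → t.Nonempty → t ∈ faces

namespace SComplex

variable {V W : Type}

/-- `fcount X i` is the number of `i`-dimensional faces of `X` (faces with `i+1` vertices). -/
noncomputable def fcount (X : SComplex V) (i : ℕ) : ℕ :=
  Nat.card {s : Finset V // s ∈ X.faces ∧ s.card = i + 1}

/-- A subcomplex is a complex whose faces are among the faces of `X`. -/
def IsSubcomplex (Z X : SComplex V) : Prop := Z.faces ⊆ X.faces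

/-- `X` is (at most) two-dimensional: every face has at most 3 vertices. -/
def dim2 (X : SComplex V) : Prop := ∀ s ∈ X.faces, s.card ≤ 3

/-- Euler characteristic of a 2-dimensional complex. -/
noncomputable def chi (X : SComplex V) : ℤ :=
  (X.fcount 0 : ℤ) - X.fcount 1 + X.fcount 2

/-- The quantity `L(X) = 2 f₁(X) - 3 f₂(X)`. -/
noncomputable def Lval (X : SComplex V) : ℤ :=
  2 * (X.fcount 1 : ℤ) - 3 * X.fcount 2

/-- The geometric realization of `X`, as a set of functions `V → ℝ`
(convex combinations of the vertices of a face). -/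
def realization (X : SComplex V) : Set (V → ℝ) :=
  {x | ∃ s ∈ X.faces, (∀ v, 0 ≤ x v) ∧ (∀ v, v ∉ s → x v = 0) ∧ ∑ v ∈ s, x v = 1}

end SComplex

/-- A simplicial map between simplicial complexes: a vertex map carrying faces to faces. -/
structure SMap {V W : Type} [DecidableEq W] (X : SComplex V) (Y : SComplex W) where
  toFun : V → W
  map_face : ∀ s ∈ X.faces, s.image toFun ∈ Y.faces

/-- The simplicial cycle `C_r` of length `r`, with vertex set `ZMod r` and
edges `{i, i+1}`. -/
def cycleC (r : ℕ) : SComplex (ZMod r) where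
  faces := {s | (∃ i, s = {i}) ∨ (∃ i : ZMod r, s = {i, i + 1})}
  nonempty_of_mem := by rintro s (⟨i, rfl⟩ | ⟨i, rfl⟩) <;> simp
  down_closed := by
    rintro s (⟨i, rfl⟩ | ⟨i, rfl⟩) t ht hne
    · left
      exact ⟨i, (Finset.Nonempty.subset_singleton_iff hne).mp ht⟩
    · classical
      have h1 : t = {i} ∨ t = {i + 1} ∨ t = {i, i + 1} := by
        have := Finset.subset_insert_iff.mp ht
        rcases Finset.eq_empty_or_nonempty (t.erase i) with h | h
        · left
          have hti : i ∈ t := by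
            by_contra hi
            rw [Finset.erase_eq_of_notMem hi] at h
            exact hne.ne_empty h
          apply Finset.eq_singleton_iff_nonempty_unique_mem.mpr
          refine ⟨hne, fun x hx => ?_⟩
          by_contra hxi
          exact (Finset.notMem_empty x) (h ▸ Finset.mem_erase.mpr ⟨hxi, hx⟩)
        · have hsub : t.erase i ⊆ {i + 1} := this
          have h2 : t.erase i = {i + 1} := (Finset.Nonempty.subset_singleton_iff h).mp hsub
          by_cases hti : i ∈ t
          · right; right
            ext x
            simp only [Finset.mem_insert, Finset.mem_singleton]
            constructor
            · intro hx
              by_cases hxi : x = i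
              · exact Or.inl hxi
              · right
                have : x ∈ t.erase i := Finset.mem_erase.mpr ⟨hxi, hx⟩
                rw [h2] at this
                simpa using this
            · rintro (rfl | rfl)
              · exact hti
              · have : i + 1 ∈ t.erase i := h2 ▸ Finset.mem_singleton_self _
                exact (Finset.mem_erase.mp this).2
          · right; left
            rw [Finset.erase_eq_of_notMem hti] at h2
            exact h2
      rcases h1 with h | h | h
      · exact Or.inl ⟨i, h⟩
      · exact Or.inl ⟨i + 1, h⟩
      · exact Or.inr ⟨i, h⟩

namespace SComplex

variable {V W : Type}

/-- The affine extension of a vertex map, on the ambient spaces of realizations. -/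
noncomputable def affineExtend [Fintype V] [DecidableEq W] (f : V → W) (x : V → ℝ) : W → ℝ :=
  fun w => ∑ v ∈ Finset.univ.filter (fun v => f v = w), x v

lemma continuous_affineExtend [Fintype V] [DecidableEq W] (f : V → W) :
    Continuous (affineExtend f : (V → ℝ) → (W → ℝ)) := by
  apply continuous_pi
  intro w
  exact continuous_finset_sum _ fun v _ => continuous_apply v

lemma affineExtend_mem [Fintype V] [DecidableEq W]
    {X : SComplex V} {Y : SComplex W} (f : SMap X Y) {x : V → ℝ}
    (hx : x ∈ X.realization) : affineExtend f.toFun x ∈ Y.realization := by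
  classical
  obtain ⟨s, hs, hnn, hsupp, hsum⟩ := hx
  refine ⟨s.image f.toFun, f.map_face s hs, ?_, ?_, ?_⟩
  · intro w
    exact Finset.sum_nonneg fun v _ => hnn v
  · intro w hw
    apply Finset.sum_eq_zero
    intro v hv
    simp only [Finset.mem_filter] at hv
    by_contra hvx
    have hvs : v ∈ s := by
      by_contra h
      exact hvx (hsupp v h)
    exact hw (Finset.mem_image.mpr ⟨v, hvs, hv.2⟩)
  · have key : ∀ w ∈ s.image f.toFun,
        affineExtend f.toFun x w = ∑ v ∈ s.filter (fun v => f.toFun v = w), x v := by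
      intro w _
      refine (Finset.sum_subset (Finset.filter_subset_filter _ (Finset.subset_univ s)) ?_).symm
      intro v hv hvn
      simp only [Finset.mem_filter] at hv hvn
      exact hsupp v (fun hvs => hvn ⟨hvs, hv.2⟩)
    rw [Finset.sum_congr rfl key,
      Finset.sum_fiberwise_of_maps_to (fun v hv => Finset.mem_image_of_mem _ hv), hsum]

end SComplex

/-- The continuous map between geometric realizations induced by a simplicial map. -/
noncomputable def SMap.realize {V W : Type} [Fintype V] [DecidableEq W]
    {X : SComplex V} {Y : SComplex W} (f : SMap X Y) :
    C(X.realization, Y.realization) :=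
  ⟨fun x => ⟨SComplex.affineExtend f.toFun x.1, SComplex.affineExtend_mem f x.2⟩,
   Continuous.subtype_mk
     ((SComplex.continuous_affineExtend f.toFun).comp continuous_subtype_val) _⟩

/-! ### Mapping cylinders, disks, fillings and area -/

/-- The gluing relation for the mapping cylinder of `g : A → B`:
the end `A × {1}` of the cylinder is glued to `B` along `g`. -/
def cylRel {A B : Type} (g : A → B) :
    (A × unitInterval ⊕ B) → (A × unitInterval ⊕ B) → Prop :=
  fun x y => ∃ a : A, x = Sum.inl (a, 1) ∧ y = Sum.inr (g a)

/-- The mapping cylinder of `g : A → B`. -/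
def MappingCyl {A B : Type} (g : A → B) : Type := Quot (cylRel g)

instance {A B : Type} [TopologicalSpace A] [TopologicalSpace B] (g : A → B) :
    TopologicalSpace (MappingCyl g) :=
  inferInstanceAs (TopologicalSpace (Quot (cylRel g)))

/-- The base `A × {0}` of the mapping cylinder. -/
def cylBase {A B : Type} (g : A → B) : Set (MappingCyl g) :=
  Set.range fun a : A => Quot.mk (cylRel g) (Sum.inl (a, 0))

/-- The closed unit disk in the plane. -/
def unitDisk : Set (ℝ × ℝ) := Metric.closedBall 0 1

/-- The unit circle in the plane. -/
def unitCircle : Set (ℝ × ℝ) := Metric.sphere 0 1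

/-- A space `T` together with a subset `Bd` is a (closed, topological) disk with
boundary `Bd` if there is a homeomorphism to the closed unit disk carrying
`Bd` onto the unit circle. -/
def IsDiskWithBoundary (T : Type) [TopologicalSpace T] (Bd : Set T) : Prop :=
  ∃ h : T ≃ₜ unitDisk, (fun t => ((h t : ℝ × ℝ))) '' Bd = unitCircle

/-- A filling of a simplicial loop `γ : C_r → X`:  simplicial maps
`C_r → D → X` composing to `γ`, where `D` is a finite simplicial complex such
that the mapping cylinder of the realization of `b : C_r → D` is a topological
disk whose boundary is `C_r × {0}`. -/
structure Filling {V : Type} [DecidableEq V] (X : SComplex V) (r : ℕ) [NeZero r]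
    (γ : SMap (cycleC r) X) where
  m : ℕ
  D : SComplex (Fin m)
  b : SMap (cycleC r) D
  proj : SMap D X
  comm : ∀ i : ZMod r, proj.toFun (b.toFun i) = γ.toFun i
  disk : IsDiskWithBoundary (MappingCyl (⇑(SMap.realize b))) (cylBase (⇑(SMap.realize b)))

/-- The (combinatorial) area of a simplicial loop: the least number of
2-dimensional faces in a filling, and `∞` if the loop has no filling
(equivalently, is not contractible). -/
noncomputable def area {V : Type} [DecidableEq V] (X : SComplex V) (r : ℕ) [NeZero r]
    (γ : SMap (cycleC r) X) : ℝ≥0∞ :=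
  ⨅ F : Filling X r γ, (F.D.fcount 2 : ℝ≥0∞)

/-- A simplicial loop is contractible iff it admits a filling. -/
def LoopContractible {V : Type} [DecidableEq V] (X : SComplex V) (r : ℕ) [NeZero r]
    (γ : SMap (cycleC r) X) : Prop :=
  Nonempty (Filling X r γ)
/-! ### The Linial–Meshulam random 2-complex -/

/-- The potential 2-faces on `n` vertices: 3-element subsets of `Fin n`. -/
def Triple (n : ℕ) : Type := {s : Finset (Fin n) // s.card = 3}

instance (n : ℕ) : Fintype (Triple n) := by unfold Triple; infer_instance

/-- The Bernoulli measure on `Bool` with success probability `p` (truncated to `[0,1]`). -/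
noncomputable def bern (p : ℝ) : Measure Bool :=
  (PMF.bernoulli (min (Real.toNNReal p) 1) (min_le_right _ _)).toMeasure

instance (p : ℝ) : IsProbabilityMeasure (bern p) :=
  PMF.toMeasure.isProbabilityMeasure _

/-- The distribution of the Linial–Meshulam random complex `Y(n,p)`:
each potential 2-face appears independently with probability `p`.  A sample
point records for each triple whether it is a face. -/
noncomputable def lmMeasure (n : ℕ) (p : ℝ) : Measure (Triple n → Bool) :=
  Measure.pi fun _ => bern p

/-- The simplicial complex on the vertex set `[n] = {1,…,n} ⊆ ℕ` determined by a sample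
`ω` of the Linial–Meshulam process: it has the complete 1-skeleton on `[n]`, and its
2-faces are the triples with `ω t = true`. -/
def lmComplex (n : ℕ) (ω : Triple n → Bool) : SComplex ℕ where
  faces := {s | s.Nonempty ∧ (∀ v ∈ s, 1 ≤ v ∧ v ≤ n) ∧
    (s.card ≤ 2 ∨ ∃ t : Triple n, ω t = true ∧ s = t.1.image (fun v : Fin n => (v : ℕ) + 1))}
  nonempty_of_mem := fun _ hs => hs.1
  down_closed := by
    classical
    rintro s ⟨-, hrange, hs⟩ t hts htne
    refine ⟨htne, fun v hv => hrange v (hts hv), ?_⟩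
    rcases Nat.lt_or_ge t.card 3 with h | h
    · exact Or.inl (by omega)
    · rcases hs with h2 | ⟨u, hu, rfl⟩
      · have := Finset.card_le_card hts
        omega
      · have hinj : Function.Injective (fun v : Fin n => (v : ℕ) + 1) := by
          intro a b hab
          simp only [add_left_inj] at hab
          exact Fin.val_injective hab
        have hcard : (u.1.image fun v : Fin n => (v : ℕ) + 1).card = 3 := by
          rw [Finset.card_image_of_injective _ hinj, u.2]
        right
        exact ⟨u, hu, Finset.eq_of_subset_of_card_le hts (by omega)⟩

/-! ### Links -/

/-- The common vertices of the links of `a` and `b` in `Y`. -/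
def LinkVerts {V : Type} [DecidableEq V] (Y : SComplex V) (a b : V) : Type :=
  {v : V // v ≠ a ∧ v ≠ b ∧ ({a, v} : Finset V) ∈ Y.faces ∧ ({b, v} : Finset V) ∈ Y.faces}

/-- The intersection `lk_Y(a) ∩ lk_Y(b)` of the links of vertices `a` and `b`
in a 2-complex `Y`, as a graph: the vertices are common neighbours of `a` and `b`,
and `{u,v}` is an edge iff both `{a,u,v}` and `{b,u,v}` are 2-faces of `Y`. -/
def linkInter {V : Type} [DecidableEq V] (Y : SComplex V) (a b : V) :
    SimpleGraph (LinkVerts Y a b) where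
  Adj u v := u.1 ≠ v.1 ∧ ({a, u.1, v.1} : Finset V) ∈ Y.faces ∧
    ({b, u.1, v.1} : Finset V) ∈ Y.faces
  symm := by
    constructor
    rintro u v ⟨h1, h2, h3⟩
    refine ⟨h1.symm, ?_, ?_⟩
    · rwa [Finset.pair_comm v.1 u.1]
    · rwa [Finset.pair_comm v.1 u.1]
  loopless := by constructor; rintro u ⟨h1, -⟩; exact h1 rfl

/-! ### Word-hyperbolic groups -/

/-- The word length of `g⁻¹ * h` with respect to a generating set `S`. -/
noncomputable def wordDist {G : Type*} [Group G] (S : Set G) (g h : G) : ℕ :=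
  sInf {n : ℕ | ∃ w : List G, w.length = n ∧ (∀ x ∈ w, x ∈ S ∨ x⁻¹ ∈ S) ∧ w.prod = g⁻¹ * h}

/-- A group is word hyperbolic (in the sense of Gromov) if it has a finite
generating set whose word metric satisfies the four-point Gromov hyperbolicity
condition for some constant `δ`. -/
def IsHyperbolicGroup (G : Type*) [Group G] : Prop :=
  ∃ S : Set G, S.Finite ∧ Subgroup.closure S = ⊤ ∧ ∃ δ : ℝ, 0 ≤ δ ∧
    ∀ x y z w : G, (wordDist S x y : ℝ) + wordDist S z w ≤
      max ((wordDist S x z : ℝ) + wordDist S y w)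
        ((wordDist S x w : ℝ) + wordDist S y z) + δ

/-! ### Wedges of circles, spheres and projective planes -/

/-- The 2-sphere. -/
noncomputable def Sphere2 : Type := Metric.sphere (0 : EuclideanSpace ℝ (Fin 3)) 1

noncomputable instance : TopologicalSpace Sphere2 :=
  inferInstanceAs (TopologicalSpace (Metric.sphere (0 : EuclideanSpace ℝ (Fin 3)) 1))

noncomputable def sphereBase : Sphere2 := by
  refine ⟨EuclideanSpace.single 0 1, ?_⟩
  show EuclideanSpace.single (0 : Fin 3) (1 : ℝ) ∈ Metric.sphere 0 1
  simp [EuclideanSpace.norm_single]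

/-- The real projective plane: the quotient of the 2-sphere identifying antipodes. -/
def RP2 : Type :=
  Quot (fun x y : Sphere2 => x.1 = -y.1)

instance : TopologicalSpace RP2 :=
  inferInstanceAs (TopologicalSpace (Quot _))

noncomputable def rp2Base : RP2 := Quot.mk _ sphereBase

/-- The wedge of a family of pointed spaces: the disjoint union with
all basepoints identified. -/
def Wedge {ι : Type} (T : ι → Type) [∀ i, TopologicalSpace (T i)] (pt : ∀ i, T i) : Type :=
  Quot (fun x y : (Σ i, T i) => x.2 = pt x.1 ∧ y.2 = pt y.1)

instance {ι : Type} (T : ι → Type) [∀ i, TopologicalSpace (T i)] (pt : ∀ i, T i) :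
    TopologicalSpace (Wedge T pt) :=
  inferInstanceAs (TopologicalSpace (Quot _))

/-- The family consisting of a point, `k` circles, `l` 2-spheres and `m`
projective planes. -/
def wedgeFam (k l m : ℕ) : (Unit ⊕ Fin k ⊕ Fin l ⊕ Fin m) → Type
  | .inl _ => PUnit
  | .inr (.inl _) => Circle
  | .inr (.inr (.inl _)) => Sphere2
  | .inr (.inr (.inr _)) => RP2

noncomputable instance (k l m : ℕ) (i : Unit ⊕ Fin k ⊕ Fin l ⊕ Fin m) :
    TopologicalSpace (wedgeFam k l m i) :=
  match i with
  | .inl _ => inferInstanceAs (TopologicalSpace PUnit)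
  | .inr (.inl _) => inferInstanceAs (TopologicalSpace Circle)
  | .inr (.inr (.inl _)) => inferInstanceAs (TopologicalSpace Sphere2)
  | .inr (.inr (.inr _)) => inferInstanceAs (TopologicalSpace RP2)

noncomputable def wedgeBase (k l m : ℕ) : ∀ i, wedgeFam k l m i
  | .inl _ => PUnit.unit
  | .inr (.inl _) => (1 : Circle)
  | .inr (.inr (.inl _)) => sphereBase
  | .inr (.inr (.inr _)) => rp2Base

/-- A wedge of `k` circles, `l` 2-spheres and `m` real projective planes. -/
noncomputable def WedgeCSP (k l m : ℕ) : Type :=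
  Wedge (wedgeFam k l m) (wedgeBase k l m)

noncomputable instance (k l m : ℕ) : TopologicalSpace (WedgeCSP k l m) :=
  inferInstanceAs (TopologicalSpace (Wedge _ _))

/-- A family of `k` copies of `ℤ` and `l` copies of `ℤ/2ℤ` (as multiplicative groups). -/
def mixedFam (k l : ℕ) : (Fin k ⊕ Fin l) → Type
  | .inl _ => Multiplicative ℤ
  | .inr _ => Multiplicative (ZMod 2)

instance (k l : ℕ) (i : Fin k ⊕ Fin l) : Group (mixedFam k l i) :=
  match i with
  | .inl _ => inferInstanceAs (Group (Multiplicative ℤ))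
  | .inr _ => inferInstanceAs (Group (Multiplicative (ZMod 2)))

/-! ### Embeddings, 3-inclusions, sparsity, and `e`-invariants -/

/-- An embedding of the complex `Z` into `X`: an injective simplicial map. -/
def EmbedsIn {V : Type} [DecidableEq V] (Z : SComplex ℕ) (X : SComplex V) : Prop :=
  ∃ g : ℕ → V, Set.InjOn g {v : ℕ | ({v} : Finset ℕ) ∈ Z.faces} ∧
    ∀ s ∈ Z.faces, s.image g ∈ X.faces

/-- A `3`-inclusion of `Z` into `X`: an injective simplicial map fixing the
vertices `1`, `2`, `3`. -/
def Incl3 (Z X : SComplex ℕ) : Prop :=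
  ∃ g : ℕ → ℕ, Set.InjOn g {v : ℕ | ({v} : Finset ℕ) ∈ Z.faces} ∧
    (g 1 = 1 ∧ g 2 = 2 ∧ g 3 = 3) ∧
    ∀ s ∈ Z.faces, s.image g ∈ X.faces

/-- `X` is `(ε, m)`-sparse: no 2-complex `Z` with `f₂(Z) ≤ m` and
`f₀(Z) < (1/2 + ε) f₂(Z)` embeds into `X`. -/
def SparseEM {V : Type} [DecidableEq V] (ε : ℝ) (m : ℕ) (X : SComplex V) : Prop :=
  ∀ Z : SComplex ℕ, Z.faces.Finite → Z.dim2 →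
    Z.fcount 2 ≤ m → ((Z.fcount 0 : ℝ) < (1/2 + ε) * Z.fcount 2) →
    ¬ EmbedsIn Z X

/-- `X` is `(ε, m, 3)`-sparse: there is no `3`-inclusion into `X` of a
2-complex `Z` with `[3] ⊆ F₀(Z)`, `f₂(Z) ≤ m` and `f₀(Z) - 3 < (1/2 + ε) f₂(Z)`. -/
def SparseEM3 (ε : ℝ) (m : ℕ) (X : SComplex ℕ) : Prop :=
  ∀ Z : SComplex ℕ, Z.faces.Finite → Z.dim2 →
    ({1} : Finset ℕ) ∈ Z.faces → ({2} : Finset ℕ) ∈ Z.faces → ({3} : Finset ℕ) ∈ Z.faces →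
    Z.fcount 2 ≤ m → ((Z.fcount 0 : ℝ) - 3 < (1/2 + ε) * Z.fcount 2) →
    ¬ Incl3 Z X

/-- The invariant `e_w(X)`: the infimum of `(f₀(Z) - w)/f₂(Z)` over subcomplexes
`Z ⊆ X` containing the vertices `1, …, w` (and having at least one 2-face). -/
noncomputable def eW (w : ℕ) (X : SComplex ℕ) : ℝ :=
  sInf {x : ℝ | ∃ Z : SComplex ℕ, Z.IsSubcomplex X ∧
    (∀ i : ℕ, 1 ≤ i → i ≤ w → ({i} : Finset ℕ) ∈ Z.faces) ∧
    0 < Z.fcount 2 ∧ x = ((Z.fcount 0 : ℝ) - w) / Z.fcount 2}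

/-! ### Immersions -/

/-- The (vertex set of the) star of a face `s`. -/
def SComplex.star {V : Type} (X : SComplex V) (s : Finset V) : Set V :=
  {v : V | ∃ t ∈ X.faces, s ⊆ t ∧ v ∈ t}

/-- A simplicial map is a `d`-immersion if its restriction to the star of any
`d`-dimensional face is an embedding (injective on vertices). -/
def IsImmersion {V W : Type} [DecidableEq W] (d : ℕ) {X : SComplex V} {Y : SComplex W}
    (f : SMap X Y) : Prop :=
  ∀ s ∈ X.faces, s.card = d + 1 → Set.InjOn f.toFun (X.star s)

/-! ### Induced maps on fundamental groups -/

/-- The homomorphism of fundamental groups induced by a continuous map. -/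
noncomputable def pi1Map {A B : Type} [TopologicalSpace A] [TopologicalSpace B]
    (f : C(A, B)) (x : A) : FundamentalGroup A x →* FundamentalGroup B (f x) :=
  CategoryTheory.Functor.mapEnd (FundamentalGroupoid.mk x)
    (FundamentalGroupoid.fundamentalGroupoidFunctor.map
      (X := TopCat.of A) (Y := TopCat.of B) (TopCat.ofHom f))

/-- `realization` is monotone with respect to subcomplexes. -/
lemma SComplex.realization_mono {V : Type} {Z X : SComplex V} (h : Z.IsSubcomplex X) :
    Z.realization ⊆ X.realization := by
  rintro x ⟨s, hs, h1, h2, h3⟩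
  exact ⟨s, h hs, h1, h2, h3⟩

/-- The inclusion of realizations induced by a subcomplex inclusion. -/
noncomputable def inclCM {V : Type} {Z X : SComplex V} (h : Z.IsSubcomplex X) :
    C(Z.realization, X.realization) :=
  ⟨Set.inclusion (SComplex.realization_mono h), continuous_inclusion _⟩


/-- The union of the three straight segments joining the vertex points `a`, `b`, `c`
in the ambient space of the realization:  the geometric 3-cycle `abc`. -/
def triangleSet {V : Type} [DecidableEq V] (a b c : V) : Set (V → ℝ) :=
  segment ℝ (fun v => if v = a then 1 else 0) (fun v => if v = b then 1 else 0) ∪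
  segment ℝ (fun v => if v = b then 1 else 0) (fun v => if v = c then 1 else 0) ∪
  segment ℝ (fun v => if v = a then 1 else 0) (fun v => if v = c then 1 else 0)

/-- The 3-cycle `abc` bounds an embedded disk in `Y`: some subset of the
realization of `Y` is a topological disk whose boundary is the geometric
3-cycle `abc`. -/
def BoundsEmbeddedDisk {V : Type} [DecidableEq V] (Y : SComplex V) (a b c : V) : Prop :=
  ∃ K : Set (V → ℝ), K ⊆ Y.realization ∧
    ∃ h : K ≃ₜ unitDisk,
      Subtype.val '' (⇑h ⁻¹' {y : unitDisk | (y : ℝ × ℝ) ∈ unitCircle}) = triangleSet a b c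

/-!
Pick a path `c = w₀, w₁, …, w_k = d` in `lk_Y(a) ∩ lk_Y(b)`, where `{a, b, d}` is a 2-face,
and continue it by a segment from `d` to the midpoint of `ab` inside that face. The suspension
of this arc with poles `a` and `b` is the union of the triangles `a wᵢ wᵢ₊₁`, `b wᵢ wᵢ₊₁` and
`abd`. Parametrizing it by the ℓ¹ unit ball of the plane, with the poles at its top and bottom
vertices, gives a continuous map that is injective, because the height is read off as
`x_a - x_b` and the arc is injective since the path is. The ℓ¹ ball is a compact convex
body, hence a disk, and its boundary is carried onto the edges `ab`, `ac` and `bc`. A disk is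
contractible, so a loop running along its boundary is null-homotopic.
-/

noncomputable section

lemma exists_homeomorph_unitDisk_of_convex {K : Set (ℝ × ℝ)} (hconv : Convex ℝ K)
    (hcpt : IsCompact K) (hint : (interior K).Nonempty) :
    ∃ h : K ≃ₜ unitDisk, ∀ z : K, (h z : ℝ × ℝ) ∈ unitCircle ↔ (z : ℝ × ℝ) ∈ frontier K := by
  obtain ⟨e, -, hclosure, hfrontier⟩ :=
    exists_homeomorph_image_interior_closure_frontier_eq_unitBall hconv hint hcpt.isBounded
  rw [hcpt.isClosed.closure_eq] at hclosure
  refine ⟨(e.image K).trans (Homeomorph.setCongr hclosure), fun z => ?_⟩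
  change e z ∈ Metric.sphere 0 1 ↔ _
  rw [← hfrontier, e.injective.mem_set_image]

def diamond : Set (ℝ × ℝ) := {z | |z.1| + |z.2| ≤ 1}

lemma diamond_eq_preimage_closedBall :
    diamond = WithLp.toLp 1 ⁻¹' Metric.closedBall (0 : WithLp 1 (ℝ × ℝ)) 1 := by
  ext z
  simp [diamond, WithLp.prod_norm_eq_of_L1]

lemma frontier_diamond : frontier diamond = {z : ℝ × ℝ | |z.1| + |z.2| = 1} := by
  rw [diamond_eq_preimage_closedBall]
  change frontier ((WithLp.homeomorphProd 1 ℝ ℝ).symm ⁻¹' _) = _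
  rw [← Homeomorph.preimage_frontier, frontier_closedBall _ one_ne_zero]
  ext z
  simp only [Set.mem_preimage, mem_sphere_zero_iff_norm, WithLp.prod_norm_eq_of_L1]
  rfl

lemma convex_diamond : Convex ℝ diamond := by
  rw [diamond_eq_preimage_closedBall]
  exact (convex_closedBall _ _).linear_preimage
    (WithLp.linearEquiv 1 ℝ (ℝ × ℝ)).symm.toLinearMap

lemma isCompact_diamond : IsCompact diamond := by
  rw [diamond_eq_preimage_closedBall]
  exact (WithLp.homeomorphProd 1 ℝ ℝ).symm.isCompact_preimage.mpr (isCompact_closedBall _ _)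

lemma zero_mem_interior_diamond : (0 : ℝ × ℝ) ∈ interior diamond := by
  have hopen : IsOpen {z : ℝ × ℝ | |z.1| + |z.2| < 1} :=
    isOpen_lt (by fun_prop) continuous_const
  have hsub : {z : ℝ × ℝ | |z.1| + |z.2| < 1} ⊆ diamond := fun _ hz => le_of_lt (α := ℝ) hz
  exact hopen.subset_interior_iff.mpr hsub (by simp)

namespace SComplex

variable {V W : Type} [DecidableEq V]

lemma convexHull_subset_realization {Y : SComplex V} {s : Finset V} (hs : s ∈ Y.faces) :
    convexHull ℝ ((fun v => Pi.single v 1) '' (s : Set V)) ⊆ Y.realization := by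
  let simplex : Set (V → ℝ) :=
    {x | (∀ v, 0 ≤ x v) ∧ (∀ v, v ∉ s → x v = 0) ∧ ∑ v ∈ s, x v = 1}
  have hconv : Convex ℝ simplex := by
    rintro x ⟨hx0, hxs, hx1⟩ y ⟨hy0, hys, hy1⟩ p q hp hq hpq
    refine ⟨fun v => ?_, fun v hv => ?_, ?_⟩
    · simp only [Pi.add_apply, Pi.smul_apply, smul_eq_mul]
      have := hx0 v; have := hy0 v; positivity
    · simp [hxs v hv, hys v hv]
    · simp [Finset.sum_add_distrib, ← Finset.mul_sum, hx1, hy1, hpq]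
  refine fun x hx => ⟨s, hs, convexHull_min ?_ hconv hx⟩
  rintro _ ⟨v, hv, rfl⟩
  refine ⟨fun w => ?_, fun w hw => ?_, ?_⟩
  · simp only [Pi.single_apply]; split_ifs <;> norm_num
  · simp [(ne_of_mem_of_not_mem hv hw).symm]
  · simp [Pi.single_apply, Finset.mem_coe.mp hv]

lemma affineExtend_eq_of_support [Fintype V] [DecidableEq W] (f : V → W) {x : V → ℝ}
    {i j : V} (hij : i ≠ j) (hx : ∀ v, v ∉ ({i, j} : Finset V) → x v = 0) :
    affineExtend f x = x i • Pi.single (f i) 1 + x j • Pi.single (f j) 1 := by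
  ext w
  rw [affineExtend, Finset.sum_filter, ← Finset.sum_subset (Finset.subset_univ {i, j})
    (fun v _ hv => by rw [hx v hv, ite_self]), Finset.sum_pair hij]
  simp [Pi.single_apply, eq_comm]

lemma affineExtend_mem_segment_of_mem_realization_cycleC {r : ℕ} [NeZero r]
    [Nontrivial (ZMod r)] [DecidableEq W] (f : ZMod r → W) {x : ZMod r → ℝ}
    (hx : x ∈ (cycleC r).realization) :
    ∃ i, affineExtend f x ∈ segment ℝ (Pi.single (f i) 1) (Pi.single (f (i + 1)) 1) := by
  obtain ⟨s, hs, hx0, hxs, hx1⟩ := hx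
  have hne : ∀ i : ZMod r, i ≠ i + 1 := fun i h => one_ne_zero (left_eq_add.mp h)
  obtain ⟨i, hsi⟩ : ∃ i, s ⊆ {i, i + 1} := by
    rcases hs with ⟨i, rfl⟩ | ⟨i, rfl⟩
    · exact ⟨i, by simp⟩
    · exact ⟨i, subset_rfl⟩
  have hsupp : ∀ v, v ∉ ({i, i + 1} : Finset (ZMod r)) → x v = 0 :=
    fun v hv => hxs v (fun h => hv (hsi h))
  have hsum : x i + x (i + 1) = 1 := by
    rw [← Finset.sum_pair (hne i), ← hx1]
    exact (Finset.sum_subset hsi fun v _ hv => hxs v hv).symm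
  exact ⟨i, x i, x (i + 1), hx0 _, hx0 _, hsum,
    (affineExtend_eq_of_support f (hne i) hsupp).symm⟩

end SComplex

lemma triangleSet_eq {V : Type} [DecidableEq V] (a b c : V) :
    triangleSet a b c = segment ℝ (Pi.single a 1) (Pi.single b 1) ∪
      segment ℝ (Pi.single b 1) (Pi.single c 1) ∪ segment ℝ (Pi.single a 1) (Pi.single c 1) := by
  have h : ∀ v : V, (fun x => if x = v then (1 : ℝ) else 0) = Pi.single v 1 := fun v => by
    ext x; simp [Pi.single_apply]
  simp only [triangleSet, h]

lemma realize_mem_triangleSet {V : Type} [DecidableEq V] {Y : SComplex V}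
    (γ : SMap (cycleC 3) Y) (x : (cycleC 3).realization) :
    (SMap.realize γ x : V → ℝ) ∈ triangleSet (γ.toFun 0) (γ.toFun 1) (γ.toFun 2) := by
  obtain ⟨i, hi⟩ := SComplex.affineExtend_mem_segment_of_mem_realization_cycleC γ.toFun x.2
  rw [triangleSet_eq]
  fin_cases i
  · exact Or.inl (Or.inl hi)
  · exact Or.inl (Or.inr hi)
  · exact Or.inr (by rw [segment_symm]; exact hi)

section EmbeddedDisk

variable {V : Type} [DecidableEq V] {Y : SComplex V} {a b c : V}

lemma boundsEmbeddedDisk_of_injOn {D : Set (ℝ × ℝ)} (hconv : Convex ℝ D) (hcpt : IsCompact D)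
    (hint : (interior D).Nonempty) {f : ℝ × ℝ → V → ℝ} (hcont : ContinuousOn f D)
    (hinj : Set.InjOn f D) (hmaps : Set.MapsTo f D Y.realization)
    (hfrontier : f '' frontier D = triangleSet a b c) : BoundsEmbeddedDisk Y a b c := by
  obtain ⟨φ, hφ⟩ := exists_homeomorph_unitDisk_of_convex hconv hcpt hint
  have : CompactSpace D := isCompact_iff_compactSpace.mp hcpt
  let e : D ≃ₜ f '' D := Continuous.homeoOfEquivCompactToT2
    (f := Equiv.Set.imageOfInjOn f D hinj) (hcont.domRestrict.subtype_mk _)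
  refine ⟨f '' D, Set.image_subset_iff.mpr hmaps, e.symm.trans φ, ?_⟩
  rw [← hfrontier]
  ext x
  constructor
  · rintro ⟨p, hp, rfl⟩
    exact ⟨e.symm p, (hφ _).mp hp, congrArg Subtype.val (e.apply_symm_apply p)⟩
  · rintro ⟨z, hz, rfl⟩
    have hzD : z ∈ D := hcpt.isClosed.frontier_subset hz
    refine ⟨e ⟨z, hzD⟩, ?_, rfl⟩
    change (φ (e.symm (e ⟨z, hzD⟩)) : ℝ × ℝ) ∈ unitCircle
    rw [e.symm_apply_apply, hφ]
    exact hz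

lemma SMap.realize_nullhomotopic_of_boundsEmbeddedDisk [Fintype V]
    (hD : BoundsEmbeddedDisk Y a b c) (γ : SMap (cycleC 3) Y)
    (h0 : γ.toFun 0 = a) (h1 : γ.toFun 1 = b) (h2 : γ.toFun 2 = c) :
    (SMap.realize γ).Nullhomotopic := by
  obtain ⟨K, hKY, φ, hbd⟩ := hD
  have : ContractibleSpace unitDisk :=
    (convex_closedBall (0 : ℝ × ℝ) 1).contractibleSpace ⟨0, by simp⟩
  have : ContractibleSpace K := φ.contractibleSpace
  have htri : triangleSet a b c ⊆ K := by
    rw [← hbd]; exact Subtype.coe_image_subset _ _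
  let g : C((cycleC 3).realization, K) :=
    ⟨fun x => ⟨SMap.realize γ x, htri (h0 ▸ h1 ▸ h2 ▸ realize_mem_triangleSet γ x)⟩,
      (continuous_subtype_val.comp (SMap.realize γ).continuous).subtype_mk _⟩
  exact ((id_nullhomotopic K).comp_left g).comp_right
    ⟨Set.inclusion hKY, continuous_inclusion hKY⟩

end EmbeddedDisk

def clamp01 (t : ℝ) : ℝ := Set.projIcc 0 1 zero_le_one t

lemma clamp01_of_nonpos {t : ℝ} (h : t ≤ 0) : clamp01 t = 0 := by
  simp [clamp01, Set.projIcc_of_le_left _ h]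

lemma clamp01_of_one_le {t : ℝ} (h : 1 ≤ t) : clamp01 t = 1 := by
  simp [clamp01, Set.projIcc_of_right_le _ h]

lemma clamp01_of_mem {t : ℝ} (h : t ∈ Set.Icc 0 1) : clamp01 t = t := by
  simp [clamp01, Set.projIcc_of_mem _ h]

@[fun_prop]
lemma continuous_clamp01 : Continuous clamp01 :=
  continuous_subtype_val.comp continuous_projIcc

lemma sum_range_clamp01_sub {n : ℕ} {t : ℝ} (h0 : 0 ≤ t) (hn : t ≤ n) :
    ∑ i ∈ Finset.range n, clamp01 (t - i) = t := by
  induction n with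
  | zero => simp [le_antisymm (by simpa using hn) h0]
  | succ n ih =>
    rw [Finset.sum_range_succ]
    rcases le_or_gt t n with h | h
    · rw [ih h, clamp01_of_nonpos (by linarith), add_zero]
    · have hone : ∀ i ∈ Finset.range n, clamp01 (t - i) = 1 := fun i hi => by
        have : (i : ℝ) + 1 ≤ n := by exact_mod_cast Finset.mem_range.mp hi
        exact clamp01_of_one_le (by linarith)
      rw [Finset.sum_congr rfl hone, Finset.sum_const, Finset.card_range, nsmul_one,
        clamp01_of_mem ⟨by linarith, by push_cast at hn; linarith⟩]
      ring

lemma continuousOn_mul_comp_of_bounded {X : Type*} [TopologicalSpace X] {s : Set X}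
    {g u : X → ℝ} {h : ℝ → ℝ} (hg : ContinuousOn g s) (hh : Continuous h)
    (hu : ∀ x ∈ s, g x ≠ 0 → ContinuousWithinAt u s x) {C : ℝ}
    (hC : ∀ x ∈ s, |h (u x)| ≤ C) :
    ContinuousOn (fun x => g x * h (u x)) s := by
  intro x hx
  by_cases hgx : g x = 0
  · have hg0 : Filter.Tendsto g (nhdsWithin x s) (nhds 0) := hgx ▸ hg x hx
    rw [ContinuousWithinAt, hgx, zero_mul]
    exact hg0.zero_mul_isBoundedUnder_le (Filter.isBoundedUnder_of_eventually_le
      (Filter.eventually_of_mem self_mem_nhdsWithin fun y hy => hC y hy))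
  · exact (hg x hx).mul (hh.continuousAt.comp_continuousWithinAt (hu x hx hgx))

namespace Fan

variable {V : Type} [DecidableEq V] {Y : SComplex V} {a b : V} {c d : LinkVerts Y a b}
  (W : (linkInter Y a b).Walk c d)

def node (i : ℕ) : V → ℝ :=
  if i ≤ W.length then Pi.single (W.getVert i).1 1
  else midpoint ℝ (Pi.single a 1 : V → ℝ) (Pi.single b 1)

def arc (t : ℝ) : V → ℝ :=
  node W 0 + ∑ i ∈ Finset.range (W.length + 1), clamp01 (t - i) • (node W (i + 1) - node W i)

def arcCoord : (V → ℝ) →ₗ[ℝ] ℝ :=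
  ∑ i ∈ Finset.range (W.length + 1), (i : ℝ) • LinearMap.proj (R := ℝ) (W.getVert i).1 +
    ((W.length : ℝ) + 1) • (LinearMap.proj (R := ℝ) (φ := fun _ : V => ℝ) a + LinearMap.proj b)

def arcParam (z : ℝ × ℝ) : ℝ :=
  ((W.length : ℝ) + 1) * (z.1 + (1 - |z.2|)) / (2 * (1 - |z.2|))

/-- The slice of the diamond at height `y`, of width `2 (1 - |y|)`, is sent onto the arc scaled
by `1 - |y|`. At the poles `arcParam` divides by zero, but there the arc is scaled by `0`. -/
def diskMap (z : ℝ × ℝ) : V → ℝ :=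
  max z.2 0 • Pi.single a 1 + max (-z.2) 0 • Pi.single b 1 + (1 - |z.2|) • arc W (arcParam W z)

variable {W}

lemma node_of_le {i : ℕ} (hi : i ≤ W.length) : node W i = Pi.single (W.getVert i).1 1 :=
  if_pos hi

lemma node_length_add_one :
    node W (W.length + 1) = midpoint ℝ (Pi.single a 1 : V → ℝ) (Pi.single b 1) :=
  if_neg (by omega)

lemma node_zero : node W 0 = Pi.single c.1 1 := by
  rw [node_of_le (Nat.zero_le _), SimpleGraph.Walk.getVert_zero]

lemma node_length : node W W.length = Pi.single d.1 1 := by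
  rw [node_of_le le_rfl, SimpleGraph.Walk.getVert_length]

lemma node_apply_left_eq_right (i : ℕ) : node W i a = node W i b := by
  unfold node
  split_ifs
  · rw [Pi.single_eq_of_ne (W.getVert i).2.1.symm, Pi.single_eq_of_ne (W.getVert i).2.2.1.symm]
  · simp [midpoint_eq_smul_add, Pi.single_apply, eq_comm, add_comm]

lemma continuous_arc : Continuous (arc W) := by
  unfold arc
  fun_prop

lemma apply_arc (L : (V → ℝ) →ₗ[ℝ] ℝ) (t : ℝ) :
    L (arc W t) = L (node W 0) + ∑ i ∈ Finset.range (W.length + 1),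
      clamp01 (t - i) * (L (node W (i + 1)) - L (node W i)) := by
  simp [arc, map_sum, map_sub]

lemma arc_apply_left_eq_right (t : ℝ) : arc W t a = arc W t b := by
  simp only [arc, Pi.add_apply, Finset.sum_apply, Pi.smul_apply, Pi.sub_apply,
    node_apply_left_eq_right (W := W)]

lemma arc_eq_lineMap {j : ℕ} (hj : j ≤ W.length) {t : ℝ} (ht : t ∈ Set.Icc (j : ℝ) (j + 1)) :
    arc W t = AffineMap.lineMap (node W j) (node W (j + 1)) (t - j) := by
  have hsplit := (Finset.sum_range_add_sum_Ico
    (fun i => clamp01 (t - i) • (node W (i + 1) - node W i)) (Nat.succ_le_succ hj)).symm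
  have hhigh : ∑ i ∈ Finset.Ico (j + 1) (W.length + 1),
      clamp01 (t - i) • (node W (i + 1) - node W i) = 0 :=
    Finset.sum_eq_zero fun i hi => by
      have : (j : ℝ) + 1 ≤ i := by exact_mod_cast (Finset.mem_Ico.mp hi).1
      rw [clamp01_of_nonpos (by linarith [ht.2]), zero_smul]
  have hlow : ∀ i ∈ Finset.range j,
      clamp01 (t - i) • (node W (i + 1) - node W i) = node W (i + 1) - node W i :=
    fun i hi => by
      have : (i : ℝ) + 1 ≤ j := by exact_mod_cast Finset.mem_range.mp hi
      rw [clamp01_of_one_le (by linarith [ht.1]), one_smul]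
  rw [arc, hsplit, hhigh, add_zero, Finset.sum_range_succ, Finset.sum_congr rfl hlow,
    Finset.sum_range_sub (node W), clamp01_of_mem ⟨by linarith [ht.1], by linarith [ht.2]⟩,
    AffineMap.lineMap_apply_module']
  abel

lemma arc_zero : arc W 0 = Pi.single c.1 1 := by
  rw [arc_eq_lineMap (j := 0) (Nat.zero_le _) (by simp)]
  simp [node_zero]

lemma arc_length_add_one :
    arc W ((W.length : ℝ) + 1) = midpoint ℝ (Pi.single a 1 : V → ℝ) (Pi.single b 1) := by
  rw [arc_eq_lineMap le_rfl (by simp), add_sub_cancel_left, AffineMap.lineMap_apply_one,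
    node_length_add_one]

lemma exists_arc_mem_segment {t : ℝ} (ht : t ∈ Set.Icc 0 ((W.length : ℝ) + 1)) :
    ∃ j ≤ W.length, arc W t ∈ segment ℝ (node W j) (node W (j + 1)) := by
  set j := min ⌊t⌋₊ W.length
  have hjt : (j : ℝ) ≤ t := le_trans (by exact_mod_cast min_le_left _ _) (Nat.floor_le ht.1)
  have htj : t ≤ j + 1 := by
    rcases le_total ⌊t⌋₊ W.length with h | h
    · rw [show j = ⌊t⌋₊ from min_eq_left h]; exact (Nat.lt_floor_add_one t).le
    · rw [show j = W.length from min_eq_right h]; exact ht.2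
  refine ⟨j, min_le_right _ _, ?_⟩
  rw [arc_eq_lineMap (min_le_right _ _) ⟨hjt, htj⟩, segment_eq_image_lineMap]
  exact ⟨t - j, ⟨by linarith, by linarith⟩, rfl⟩

lemma arcCoord_apply (s : V → ℝ) : arcCoord W s =
    ∑ i ∈ Finset.range (W.length + 1), (i : ℝ) * s (W.getVert i).1 +
      ((W.length : ℝ) + 1) * (s a + s b) := by
  simp [arcCoord, mul_add]

lemma arcCoord_node (hW : W.IsPath) (hab : a ≠ b) {i : ℕ} (hi : i ≤ W.length + 1) :
    arcCoord W (node W i) = i := by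
  rcases hi.lt_or_eq with hi | rfl
  · have hi : i ≤ W.length := Nat.lt_succ_iff.mp hi
    rw [node_of_le hi, arcCoord_apply, Finset.sum_eq_single i,
      Pi.single_eq_of_ne (W.getVert i).2.1.symm, Pi.single_eq_of_ne (W.getVert i).2.2.1.symm]
    · simp
    · intro j hj hji
      rw [Pi.single_eq_of_ne, mul_zero]
      exact fun h => hji (hW.getVert_injOn (Nat.lt_succ_iff.mp (Finset.mem_range.mp hj)) hi
        (Subtype.ext h))
    · exact fun h => absurd (Finset.mem_range.mpr (by omega)) h
  · rw [node_length_add_one, arcCoord_apply]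
    simp [midpoint_eq_smul_add, (W.getVert _).2.1, (W.getVert _).2.2.1, hab, hab.symm]
    ring

lemma arcCoord_arc (hW : W.IsPath) (hab : a ≠ b) {t : ℝ}
    (ht : t ∈ Set.Icc 0 ((W.length : ℝ) + 1)) : arcCoord W (arc W t) = t := by
  have hstep : ∀ i ∈ Finset.range (W.length + 1), clamp01 (t - i) *
      (arcCoord W (node W (i + 1)) - arcCoord W (node W i)) = clamp01 (t - i) :=
    fun i hi => by
      have := Finset.mem_range.mp hi
      rw [arcCoord_node hW hab (by omega), arcCoord_node hW hab (by omega)]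
      push_cast; ring
  rw [apply_arc, Finset.sum_congr rfl hstep, arcCoord_node hW hab (Nat.zero_le _),
    sum_range_clamp01_sub ht.1 (by exact_mod_cast ht.2), Nat.cast_zero, zero_add]

lemma injOn_arc (hW : W.IsPath) (hab : a ≠ b) :
    Set.InjOn (arc W) (Set.Icc 0 ((W.length : ℝ) + 1)) :=
  fun s hs t ht hst => by rw [← arcCoord_arc hW hab hs, hst, arcCoord_arc hW hab ht]

lemma arcParam_mem_Icc {z : ℝ × ℝ} (hz : z ∈ diamond) :
    arcParam W z ∈ Set.Icc 0 ((W.length : ℝ) + 1) := by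
  have hz : |z.1| + |z.2| ≤ 1 := hz
  have hx := abs_le.mp (show |z.1| ≤ 1 - |z.2| by linarith)
  rcases (show |z.2| ≤ 1 by linarith [abs_nonneg z.1]).eq_or_lt with hy | hy
  · simp [arcParam, hy]; positivity
  · constructor
    · unfold arcParam; apply div_nonneg <;> nlinarith
    · rw [arcParam, div_le_iff₀ (by linarith)]; nlinarith

lemma continuousOn_diskMap : ContinuousOn (diskMap W) diamond := by
  refine continuousOn_pi.mpr fun v => ?_
  simp only [diskMap, Pi.add_apply, Pi.smul_apply, smul_eq_mul]
  obtain ⟨C, hC⟩ := isCompact_Icc.exists_bound_of_continuousOn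
    ((continuous_apply v).comp (continuous_arc (W := W))).continuousOn
  refine ContinuousOn.add (by fun_prop) (continuousOn_mul_comp_of_bounded
    (h := fun t => arc W t v) (u := arcParam W) (by fun_prop)
    ((continuous_apply v).comp continuous_arc) (fun z _ hz => ?_)
    (fun z hz => hC _ (arcParam_mem_Icc hz)))
  exact (ContinuousAt.div (by fun_prop) (by fun_prop) (by simpa using hz)).continuousWithinAt

lemma diskMap_of_nonneg {z : ℝ × ℝ} (hy : 0 ≤ z.2) :
    diskMap W z = z.2 • (Pi.single a 1 : V → ℝ) + (1 - z.2) • arc W (arcParam W z) := by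
  simp [diskMap, max_eq_right (neg_nonpos.mpr hy), max_eq_left hy, abs_of_nonneg hy]

lemma diskMap_of_nonpos {z : ℝ × ℝ} (hy : z.2 ≤ 0) :
    diskMap W z = (-z.2) • (Pi.single b 1 : V → ℝ) + (1 + z.2) • arc W (arcParam W z) := by
  simp [diskMap, max_eq_right hy, max_eq_left (neg_nonneg.mpr hy), abs_of_nonpos hy,
    sub_neg_eq_add]

lemma diskMap_of_right {z : ℝ × ℝ} (hy : |z.2| ≤ 1) (hx : z.1 = 1 - |z.2|) :
    diskMap W z =
      ((1 + z.2) / 2) • (Pi.single a 1 : V → ℝ) + ((1 - z.2) / 2) • Pi.single b 1 := by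
  have harc : (1 - |z.2|) • arc W (arcParam W z) =
      (1 - |z.2|) • midpoint ℝ (Pi.single a 1 : V → ℝ) (Pi.single b 1) := by
    rcases hy.eq_or_lt with hs | hs
    · simp [hs]
    · have hs : 2 * (1 - |z.2|) ≠ 0 := by linarith
      rw [arcParam, hx, ← two_mul, mul_div_assoc, div_self hs, mul_one, arc_length_add_one]
  rw [diskMap, harc, midpoint_eq_smul_add, invOf_eq_inv]
  rcases le_total 0 z.2 with h | h
  · rw [max_eq_left h, max_eq_right (by linarith), abs_of_nonneg h]; module
  · rw [max_eq_right h, max_eq_left (by linarith), abs_of_nonpos h]; module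

lemma diskMap_of_left {z : ℝ × ℝ} (hx : z.1 = -(1 - |z.2|)) :
    diskMap W z = max z.2 0 • (Pi.single a 1 : V → ℝ) + max (-z.2) 0 • Pi.single b 1 +
      (1 - |z.2|) • Pi.single c.1 1 := by
  rw [diskMap, arcParam, hx, neg_add_cancel, mul_zero, zero_div, arc_zero]

lemma diskMap_apply_left_sub_right (hab : a ≠ b) (z : ℝ × ℝ) :
    diskMap W z a - diskMap W z b = z.2 := by
  simp [diskMap, hab, hab.symm, arc_apply_left_eq_right (W := W),
    max_zero_sub_max_neg_zero_eq_self]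

lemma injOn_diskMap (hW : W.IsPath) (hab : a ≠ b) : Set.InjOn (diskMap W) diamond := by
  intro z hz z' hz' h
  have hy : z.2 = z'.2 := by
    rw [← diskMap_apply_left_sub_right hab, h, diskMap_apply_left_sub_right hab]
  have hz1 : |z.1| + |z.2| ≤ 1 := hz
  have hz1' : |z'.1| + |z.2| ≤ 1 := hy ▸ hz'
  rcases (show |z.2| ≤ 1 by linarith [abs_nonneg z.1]).eq_or_lt with hpole | hlt
  · refine Prod.ext ?_ hy
    rw [abs_nonpos_iff.mp (by linarith : |z.1| ≤ 0), abs_nonpos_iff.mp (by linarith : |z'.1| ≤ 0)]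
  · have hs : (1 : ℝ) - |z.2| ≠ 0 := by linarith
    have harc : arc W (arcParam W z) = arc W (arcParam W z') := by
      simp only [diskMap, ← hy] at h
      exact smul_right_injective _ hs (add_left_cancel h)
    have hparam := injOn_arc hW hab (arcParam_mem_Icc hz) (arcParam_mem_Icc hz') harc
    rw [arcParam, arcParam, ← hy, div_left_inj' (by simpa using hs),
      mul_right_inj' (by positivity)] at hparam
    exact Prod.ext (by linarith) hy

lemma exists_face_convexHull (hd : ({a, b, d.1} : Finset V) ∈ Y.faces) {j : ℕ}
    (hj : j ≤ W.length) {p : V} (hp : p = a ∨ p = b) :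
    ∃ σ ∈ Y.faces, ∀ x ∈ ({Pi.single p 1, node W j, node W (j + 1)} : Set (V → ℝ)),
      x ∈ convexHull ℝ ((fun v => (Pi.single v 1 : V → ℝ)) '' (σ : Set V)) := by
  have hvert : ∀ {σ : Finset V} {v : V}, v ∈ σ → (Pi.single v 1 : V → ℝ) ∈
      convexHull ℝ ((fun v => (Pi.single v 1 : V → ℝ)) '' (σ : Set V)) :=
    fun hv => subset_convexHull ℝ _ ⟨_, hv, rfl⟩
  rcases hj.lt_or_eq with hj | rfl
  · obtain ⟨-, hfa, hfb⟩ := W.adj_getVert_succ hj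
    refine ⟨{p, (W.getVert j).1, (W.getVert (j + 1)).1},
      by rcases hp with rfl | rfl <;> assumption, ?_⟩
    simp only [Set.mem_insert_iff, Set.mem_singleton_iff, forall_eq_or_imp, forall_eq,
      node_of_le hj.le, node_of_le hj]
    exact ⟨hvert (by simp), hvert (by simp), hvert (by simp)⟩
  · refine ⟨{a, b, d.1}, hd, ?_⟩
    simp only [Set.mem_insert_iff, Set.mem_singleton_iff, forall_eq_or_imp, forall_eq,
      node_length, node_length_add_one]
    exact ⟨hvert (by rcases hp with rfl | rfl <;> simp), hvert (by simp),
      (convex_convexHull ℝ _).segment_subset (hvert (by simp)) (hvert (by simp))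
        (midpoint_mem_segment _ _)⟩

lemma diskMap_mem_realization (hd : ({a, b, d.1} : Finset V) ∈ Y.faces) {z : ℝ × ℝ}
    (hz : z ∈ diamond) : diskMap W z ∈ Y.realization := by
  have hz1 : |z.1| + |z.2| ≤ 1 := hz
  have hy := abs_le.mp (show |z.2| ≤ 1 by linarith [abs_nonneg z.1])
  obtain ⟨p, hp, hseg⟩ : ∃ p, (p = a ∨ p = b) ∧
      diskMap W z ∈ segment ℝ (Pi.single p 1) (arc W (arcParam W z)) := by
    rcases le_total 0 z.2 with hy0 | hy0
    · exact ⟨a, Or.inl rfl, z.2, 1 - z.2, hy0, by linarith, by ring,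
        (diskMap_of_nonneg hy0).symm⟩
    · exact ⟨b, Or.inr rfl, -z.2, 1 + z.2, by linarith, by linarith, by ring,
        (diskMap_of_nonpos hy0).symm⟩
  obtain ⟨j, hj, harc⟩ := exists_arc_mem_segment (arcParam_mem_Icc (W := W) hz)
  obtain ⟨σ, hσ, hhull⟩ := exists_face_convexHull hd hj hp
  have hconv := convex_convexHull ℝ ((fun v => (Pi.single v 1 : V → ℝ)) '' (σ : Set V))
  exact SComplex.convexHull_subset_realization hσ (hconv.segment_subset (hhull _ (by simp))
    (hconv.segment_subset (hhull _ (by simp)) (hhull _ (by simp)) harc) hseg)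

lemma image_diskMap_frontier_diamond :
    diskMap W '' frontier diamond = triangleSet a b c.1 := by
  rw [frontier_diamond, triangleSet_eq]
  ext x
  constructor
  · rintro ⟨z, hz, rfl⟩
    have hz : |z.1| + |z.2| = 1 := hz
    have hy : |z.2| ≤ 1 := by linarith [abs_nonneg z.1]
    have hy' := abs_le.mp hy
    rcases (abs_eq (by linarith : (0 : ℝ) ≤ 1 - |z.2|)).mp (by linarith : |z.1| = 1 - |z.2|)
      with hx | hx
    · exact Or.inl (Or.inl ⟨_, _, by linarith, by linarith, by ring,
        (diskMap_of_right hy hx).symm⟩)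
    · rw [diskMap_of_left hx]
      rcases le_total 0 z.2 with h | h
      · refine Or.inr ⟨z.2, 1 - z.2, h, by linarith, by ring, ?_⟩
        rw [max_eq_left h, max_eq_right (by linarith), abs_of_nonneg h]; module
      · refine Or.inl (Or.inr ⟨-z.2, 1 + z.2, by linarith, by linarith, by ring, ?_⟩)
        rw [max_eq_right h, max_eq_left (by linarith), abs_of_nonpos h]; module
  · rintro ((⟨α, β, hα, hβ, hαβ, rfl⟩ | ⟨α, β, hα, hβ, hαβ, rfl⟩) | ⟨α, β, hα, hβ, hαβ, rfl⟩)
    · have hy : |α - β| ≤ 1 := abs_le.mpr ⟨by linarith, by linarith⟩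
      refine ⟨(1 - |α - β|, α - β), by simp [abs_of_nonneg (sub_nonneg.mpr hy)], ?_⟩
      rw [diskMap_of_right hy rfl]
      congr 2 <;> linarith
    · refine ⟨(-β, -α), by simp [abs_of_nonneg hα, abs_of_nonneg hβ, add_comm, hαβ], ?_⟩
      rw [diskMap_of_left (by simp [abs_of_nonneg hα]; linarith)]
      simp [abs_of_nonneg hα, max_eq_right (neg_nonpos.mpr hα), max_eq_left hα,
        show 1 - α = β by linarith]
    · refine ⟨(-β, α), by simp [abs_of_nonneg hα, abs_of_nonneg hβ, add_comm, hαβ], ?_⟩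
      rw [diskMap_of_left (by simp [abs_of_nonneg hα]; linarith)]
      simp [abs_of_nonneg hα, max_eq_right (neg_nonpos.mpr hα), max_eq_left hα,
        show 1 - α = β by linarith]

end Fan

lemma boundsEmbeddedDisk_of_isPath {V : Type} [DecidableEq V] {Y : SComplex V} {a b : V}
    (hab : a ≠ b) {c d : LinkVerts Y a b} {W : (linkInter Y a b).Walk c d} (hW : W.IsPath)
    (hd : ({a, b, d.1} : Finset V) ∈ Y.faces) : BoundsEmbeddedDisk Y a b c.1 :=
  boundsEmbeddedDisk_of_injOn convex_diamond isCompact_diamond ⟨0, zero_mem_interior_diamond⟩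
    Fan.continuousOn_diskMap (Fan.injOn_diskMap hW hab)
    (fun _ hz => Fan.diskMap_mem_realization hd hz) Fan.image_diskMap_frontier_diamond

lemma exists_linkVerts_of_face {V : Type} [DecidableEq V] {Y : SComplex V} {a b d : V}
    (hd : ({a, b, d} : Finset V) ∈ Y.faces) (hcard : ({a, b, d} : Finset V).card = 3) :
    ∃ d' : LinkVerts Y a b, d'.1 = d := by
  have hda : d ≠ a := by
    rintro rfl
    have := Finset.card_le_two (a := d) (b := b)
    simp_all [Finset.pair_comm]
  have hdb : d ≠ b := by
    rintro rfl
    have := Finset.card_le_two (a := a) (b := d)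
    simp_all
  refine ⟨⟨d, hda, hdb, Y.down_closed _ hd _ ?_ (by simp), Y.down_closed _ hd _ ?_ (by simp)⟩,
    rfl⟩ <;> intro x <;> simp only [Finset.mem_insert, Finset.mem_singleton] <;> tauto

end

theorem three_cycle_bounds_disk_general
    (V : Type) [DecidableEq V] [Fintype V] (Y : SComplex V)
    (a b : V) (hab : a ≠ b)
    (hconn : (linkInter Y a b).Connected)
    (hd : ∃ d : V, ({a, b, d} : Finset V) ∈ Y.faces ∧ ({a, b, d} : Finset V).card = 3)
    (c : LinkVerts Y a b) :
    BoundsEmbeddedDisk Y a b c.1 ∧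
      ∀ γ : SMap (cycleC 3) Y,
        γ.toFun 0 = a → γ.toFun 1 = b → γ.toFun 2 = c.1 →
        (SMap.realize γ).Nullhomotopic := by
  classical
  obtain ⟨d, hface, hcard⟩ := hd
  obtain ⟨d, rfl⟩ := exists_linkVerts_of_face hface hcard
  obtain ⟨W⟩ := hconn.preconnected c d
  have hdisk := boundsEmbeddedDisk_of_isPath hab W.toPath.2 hface
  exact ⟨hdisk, fun γ => γ.realize_nullhomotopic_of_boundsEmbeddedDisk hdisk⟩

/-- If `lk_Y(a) ∩ lk_Y(b)` is connected and `{a,b,d}` is a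
2-face of `Y` for some `d`, then for any vertex `c` of `lk_Y(a) ∩ lk_Y(b)` the
3-cycle with edges `{a,b}`, `{a,c}`, `{b,c}` bounds an embedded disk in `Y`; in
particular this 3-cycle is null-homotopic in `Y`. -/
theorem three_cycle_bounds_disk
    (V : Type) [DecidableEq V] [Fintype V] (Y : SComplex V) (hdim : Y.dim2)
    (a b : V) (hab : a ≠ b)
    (hconn : (linkInter Y a b).Connected)
    (hd : ∃ d : V, ({a, b, d} : Finset V) ∈ Y.faces ∧ ({a, b, d} : Finset V).card = 3)
    (c : LinkVerts Y a b) :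
    BoundsEmbeddedDisk Y a b c.1 ∧
      ∀ γ : SMap (cycleC 3) Y,
        γ.toFun 0 = a → γ.toFun 1 = b → γ.toFun 2 = c.1 →
        (SMap.realize γ).Nullhomotopic :=
  three_cycle_bounds_disk_general V Y a b hab hconn hd c
end

section
/- For every m ∈ ℤ⁺, every ε > 0, and every p = O(n^{-1/2 - ε}), the Linial–Meshulam random 2-complex Y(n,p) is asymptotically almost surely (ε, m, 3)-sparse. -/
open Finset MeasureTheory
open scoped ENNReal

/-! A complex `Z` with `f₀(Z) - 3 < (1/2 + ε) f₂(Z)` and a 3-inclusion into `Y(n,p)` leaves a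
footprint: a set `T` of `k = f₂(Z) ≤ m` present 2-faces which, besides `1, 2, 3`, span only
`d < (1/2 + ε) k` vertices. There are at most `n^d` choices of these vertices and a number of
choices of `T` bounded in terms of `d` alone, so a union bound over the finitely many pairs
`(d, k)` bounds the failure probability by a finite sum of terms `C n^d p^k`. Since
`p = O(n^{-1/2-ε})`, each of them is `O(n^{d - (1/2+ε)k}) = o(1)`. -/

open Filter Topology

namespace SComplex

variable {V W : Type} (X : SComplex V)

def vertices : Set V := {v | {v} ∈ X.faces}

variable {X}

lemma mem_vertices_of_mem {s : Finset V} (hs : s ∈ X.faces) {v : V} (hv : v ∈ s) :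
    v ∈ X.vertices :=
  X.down_closed s hs {v} (singleton_subset_iff.mpr hv) (singleton_nonempty v)

lemma fcount_eq_ncard (i : ℕ) : X.fcount i = {s | s ∈ X.faces ∧ s.card = i + 1}.ncard :=
  Nat.card_coe_set_eq _

lemma fcount_zero_eq_ncard_vertices : X.fcount 0 = X.vertices.ncard := by
  have : {s | s ∈ X.faces ∧ s.card = 0 + 1} = (fun v => ({v} : Finset V)) '' X.vertices := by
    ext s
    simp only [zero_add, card_eq_one, Set.mem_ofPred_eq, Set.mem_image, vertices]
    constructor
    · rintro ⟨hs, v, rfl⟩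
      exact ⟨v, hs, rfl⟩
    · rintro ⟨v, hv, rfl⟩
      exact ⟨hv, v, rfl⟩
  rw [fcount_eq_ncard, this, singleton_injective.injOn.ncard_image]

variable [DecidableEq W] {g : V → W}

lemma card_image_of_mem_faces (hg : Set.InjOn g X.vertices) {s : Finset V}
    (hs : s ∈ X.faces) : (s.image g).card = s.card :=
  card_image_of_injOn fun _ hv _ hw => hg (mem_vertices_of_mem hs hv) (mem_vertices_of_mem hs hw)

lemma injOn_image_faces (hg : Set.InjOn g X.vertices) : Set.InjOn (image g) X.faces := by
  intro s hs t ht hst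
  have hsub {u : Finset V} (hu : u ∈ X.faces) : (u : Set V) ⊆ X.vertices :=
    fun _ hv => mem_vertices_of_mem hu hv
  apply coe_injective
  rw [← hg.image_eq_image_iff (hsub hs) (hsub ht), ← coe_image, ← coe_image, hst]

lemma ncard_image_faces (hg : Set.InjOn g X.vertices) (i : ℕ) :
    (image g '' {s | s ∈ X.faces ∧ s.card = i + 1}).ncard = X.fcount i := by
  rw [fcount_eq_ncard, ((injOn_image_faces hg).mono fun _ hs => hs.1).ncard_image]

end SComplex

lemma Fin.val_add_one_injective {n : ℕ} : Function.Injective fun v : Fin n => (v : ℕ) + 1 :=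
  (add_left_injective 1).comp Fin.val_injective

namespace Triple

variable {n : ℕ}

/-- The face of `lmComplex` carried by `t`: the index `v : Fin n` is the vertex `v + 1`. -/
def shift (t : Triple n) : Finset ℕ := t.1.image fun v : Fin n => (v : ℕ) + 1

lemma shift_injective : Function.Injective (shift (n := n)) :=
  (image_injective Fin.val_add_one_injective).comp Subtype.val_injective

lemma card_shift (t : Triple n) : t.shift.card = 3 :=
  (card_image_of_injective _ Fin.val_add_one_injective).trans t.2

lemma shift_subset_Icc (t : Triple n) : t.shift ⊆ Icc 1 n := by
  intro x hx
  obtain ⟨v, -, rfl⟩ := mem_image.mp hx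
  exact mem_Icc.mpr ⟨by omega, v.2⟩

lemma card_filter_shift_subset_le (S : Finset ℕ) :
    (univ.filter fun t : Triple n => t.shift ⊆ S).card ≤ S.card ^ 3 :=
  calc _ ≤ (S.powersetCard 3).card :=
        card_le_card_of_injOn shift
          (fun t ht => mem_powersetCard.mpr ⟨(mem_filter.mp ht).2, t.card_shift⟩)
          shift_injective.injOn
    _ ≤ S.card ^ 3 := by rw [card_powersetCard]; exact Nat.choose_le_pow _ _

end Triple

lemma exists_triple_of_mem_lmComplex {n : ℕ} {ω : Triple n → Bool} {s : Finset ℕ}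
    (hs : s ∈ (lmComplex n ω).faces) (h3 : s.card = 3) : ∃ t, ω t = true ∧ s = t.shift := by
  obtain ⟨-, -, h | h⟩ := hs
  · omega
  · exact h

def extraVertices {n : ℕ} (T : Finset (Triple n)) : Finset ℕ :=
  T.biUnion Triple.shift \ {1, 2, 3}

section ExtraVertices

variable {n : ℕ}

lemma card_extraVertices_le (T : Finset (Triple n)) : (extraVertices T).card ≤ 3 * T.card :=
  calc (extraVertices T).card ≤ (T.biUnion Triple.shift).card := card_le_card sdiff_subset
    _ ≤ T.card * 3 := card_biUnion_le_card_mul _ _ _ fun t _ => t.card_shift.le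
    _ = 3 * T.card := mul_comm _ _

lemma shift_subset_extraVertices_union {T : Finset (Triple n)} {t : Triple n} (ht : t ∈ T) :
    t.shift ⊆ extraVertices T ∪ {1, 2, 3} := by
  rw [extraVertices, sdiff_union_self_eq_union]
  exact (subset_biUnion_of_mem _ ht).trans subset_union_left

lemma card_extraVertices_add_three_le {T : Finset (Triple n)} {U : Set ℕ} (hU : U.Finite)
    (hT : ∀ t ∈ T, ↑t.shift ⊆ U) (h123 : ↑({1, 2, 3} : Finset ℕ) ⊆ U) :
    (extraVertices T).card + 3 ≤ U.ncard := by
  have hsub : ↑(T.biUnion Triple.shift ∪ {1, 2, 3}) ⊆ U := by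
    rw [coe_union, coe_biUnion]
    exact Set.union_subset (Set.iUnion₂_subset hT) h123
  calc (extraVertices T).card + 3 = (T.biUnion Triple.shift ∪ {1, 2, 3}).card :=
        card_sdiff_add_card _ _
    _ = (↑(T.biUnion Triple.shift ∪ {1, 2, 3}) : Set ℕ).ncard := (Set.ncard_coe_finset _).symm
    _ ≤ U.ncard := Set.ncard_le_ncard hsub hU

/-- `E = extraVertices T` is a `d`-subset of `[n]`, and given `E`, `T` is a set of triples inside
`E ∪ {1, 2, 3}`. -/
lemma card_filter_card_extraVertices_le (d : ℕ) :
    (univ.filter fun T : Finset (Triple n) => (extraVertices T).card = d).card ≤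
      2 ^ (d + 3) ^ 3 * n ^ d := by
  classical
  set S := univ.filter fun T : Finset (Triple n) => (extraVertices T).card = d
  have hmaps : ∀ T ∈ S, extraVertices T ∈ (Icc 1 n).powersetCard d := fun T hT =>
    mem_powersetCard.mpr ⟨sdiff_subset.trans (biUnion_subset.mpr fun t _ => t.shift_subset_Icc),
      (mem_filter.mp hT).2⟩
  have hfiber : ∀ E ∈ (Icc 1 n).powersetCard d,
      (S.filter fun T => extraVertices T = E).card ≤ 2 ^ (d + 3) ^ 3 := by
    intro E hE
    set allowed := univ.filter fun t : Triple n => t.shift ⊆ E ∪ {1, 2, 3}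
    have hallowed : allowed.card ≤ (d + 3) ^ 3 := by
      refine (Triple.card_filter_shift_subset_le _).trans (Nat.pow_le_pow_left ?_ 3)
      calc (E ∪ {1, 2, 3}).card ≤ E.card + ({1, 2, 3} : Finset ℕ).card := card_union_le _ _
        _ = d + 3 := by rw [(mem_powersetCard.mp hE).2]; rfl
    calc _ ≤ allowed.powerset.card := by
          refine card_le_card fun T hT => mem_powerset.mpr fun t ht => ?_
          obtain ⟨-, rfl⟩ := mem_filter.mp hT
          exact mem_filter.mpr ⟨mem_univ _, shift_subset_extraVertices_union ht⟩
      _ ≤ 2 ^ (d + 3) ^ 3 := by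
          rw [card_powerset]
          exact Nat.pow_le_pow_right two_pos hallowed
  calc _ ≤ 2 ^ (d + 3) ^ 3 * ((Icc 1 n).powersetCard d).card :=
        card_le_mul_card_image_of_maps_to hmaps _ hfiber
    _ ≤ 2 ^ (d + 3) ^ 3 * n ^ d := by
        rw [card_powersetCard, Nat.card_Icc, Nat.add_sub_cancel]
        exact Nat.mul_le_mul_left _ (Nat.choose_le_pow _ _)

lemma exists_faces_of_incl3 {ω : Triple n → Bool} {Z : SComplex ℕ} (hfin : Z.faces.Finite)
    (h1 : ({1} : Finset ℕ) ∈ Z.faces) (h2 : ({2} : Finset ℕ) ∈ Z.faces)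
    (h3 : ({3} : Finset ℕ) ∈ Z.faces) (hZ : Incl3 Z (lmComplex n ω)) :
    ∃ T : Finset (Triple n), (∀ t ∈ T, ω t = true) ∧ T.card = Z.fcount 2 ∧
      (extraVertices T).card + 3 ≤ Z.fcount 0 := by
  classical
  obtain ⟨g, hg : Set.InjOn g Z.vertices, ⟨g1, g2, g3⟩, hface⟩ := hZ
  set F := image g '' {s | s ∈ Z.faces ∧ s.card = 2 + 1}
  have hF : ∀ s ∈ F, ∃ t, ω t = true ∧ s = t.shift := by
    rintro _ ⟨s, ⟨hs, hs3⟩, rfl⟩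
    exact exists_triple_of_mem_lmComplex (hface s hs)
      ((SComplex.card_image_of_mem_faces hg hs).trans hs3)
  set T := univ.filter fun t : Triple n => t.shift ∈ F
  have hshiftT : Triple.shift '' (T : Set (Triple n)) = F := by
    ext s
    simp only [T, coe_filter, mem_univ, true_and, Set.mem_image, Set.mem_ofPred_eq]
    constructor
    · rintro ⟨t, ht, rfl⟩
      exact ht
    · intro hs
      obtain ⟨t, -, rfl⟩ := hF s hs
      exact ⟨t, hs, rfl⟩
  refine ⟨T, fun t ht => ?_, ?_, ?_⟩
  · obtain ⟨t', ht', he⟩ := hF _ (mem_filter.mp ht).2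
    rwa [Triple.shift_injective he]
  · rw [← Set.ncard_coe_finset, ← Triple.shift_injective.injOn.ncard_image, hshiftT,
      SComplex.ncard_image_faces hg]
  · have hvert : Z.vertices.Finite := hfin.preimage singleton_injective.injOn
    rw [SComplex.fcount_zero_eq_ncard_vertices, ← hg.ncard_image]
    refine card_extraVertices_add_three_le (hvert.image g) (fun t ht => ?_) ?_
    · obtain ⟨s, ⟨hs, -⟩, hst⟩ := (mem_filter.mp ht).2
      intro x hx
      obtain ⟨w, hw, rfl⟩ := mem_image.mp (hst ▸ hx)
      exact Set.mem_image_of_mem g (SComplex.mem_vertices_of_mem hs hw)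
    · intro x hx
      simp only [coe_insert, coe_singleton, Set.mem_insert_iff, Set.mem_singleton_iff] at hx
      rcases hx with rfl | rfl | rfl
      exacts [⟨1, h1, g1⟩, ⟨2, h2, g2⟩, ⟨3, h3, g3⟩]

end ExtraVertices

noncomputable def denseFaceSets (n m : ℕ) (a : ℝ) : Finset (Finset (Triple n)) :=
  univ.filter fun T => T.card ≤ m ∧ ((extraVertices T).card : ℝ) < a * T.card

/-- Contains `((extraVertices T).card, T.card)` for every `T ∈ denseFaceSets n m a`. -/
noncomputable def densePairs (m : ℕ) (a : ℝ) : Finset (ℕ × ℕ) :=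
  (range (3 * m + 1) ×ˢ range (m + 1)).filter fun b => (b.1 : ℝ) < a * b.2

lemma exists_mem_denseFaceSets_of_not_sparseEM3 {n m : ℕ} {eps : ℝ} {ω : Triple n → Bool}
    (h : ¬ SparseEM3 eps m (lmComplex n ω)) :
    ∃ T ∈ denseFaceSets n m (1 / 2 + eps), ∀ t ∈ T, ω t = true := by
  simp only [SparseEM3, not_forall, not_not] at h
  obtain ⟨Z, hfin, -, h1, h2, h3, hm, hdense, hZ⟩ := h
  obtain ⟨T, hω, hcard, hextra⟩ := exists_faces_of_incl3 hfin h1 h2 h3 hZ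
  refine ⟨T, mem_filter.mpr ⟨mem_univ _, hcard ▸ hm, ?_⟩, hω⟩
  have : ((extraVertices T).card : ℝ) + 3 ≤ Z.fcount 0 := by exact_mod_cast hextra
  rw [hcard]
  linarith

lemma sum_denseFaceSets_le (n m : ℕ) (a : ℝ) (x : ℝ≥0∞) :
    ∑ T ∈ denseFaceSets n m a, x ^ T.card ≤
      ∑ b ∈ densePairs m a,
        (2 : ℝ≥0∞) ^ (b.1 + 3) ^ 3 * ((n : ℝ≥0∞) ^ b.1 * x ^ b.2) := by
  classical
  have hmaps : ∀ T ∈ denseFaceSets n m a,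
      ((extraVertices T).card, T.card) ∈ densePairs m a := by
    intro T hT
    obtain ⟨-, hm, hdense⟩ := mem_filter.mp hT
    have := card_extraVertices_le T
    simp only [densePairs, mem_filter, mem_product, mem_range]
    exact ⟨⟨by omega, by omega⟩, hdense⟩
  rw [← sum_fiberwise_of_maps_to hmaps]
  refine sum_le_sum fun b _ => ?_
  set fiber := (denseFaceSets n m a).filter fun T => ((extraVertices T).card, T.card) = b
  have hfiber : fiber ⊆ univ.filter fun T => (extraVertices T).card = b.1 := fun T hT =>
    mem_filter.mpr ⟨mem_univ _, congrArg Prod.fst (mem_filter.mp hT).2⟩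
  calc ∑ T ∈ fiber, x ^ T.card = ∑ _T ∈ fiber, x ^ b.2 :=
        sum_congr rfl fun T hT => by rw [← (mem_filter.mp hT).2]
    _ = fiber.card * x ^ b.2 := by rw [sum_const, nsmul_eq_mul]
    _ ≤ ((2 ^ (b.1 + 3) ^ 3 * n ^ b.1 : ℕ) : ℝ≥0∞) * x ^ b.2 := by
        gcongr
        exact (card_le_card hfiber).trans (card_filter_card_extraVertices_le b.1)
    _ = _ := by push_cast; ring

instance (n : ℕ) (p : ℝ) : IsProbabilityMeasure (lmMeasure n p) :=
  inferInstanceAs (IsProbabilityMeasure (Measure.pi fun _ => bern p))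

lemma bern_true_le (p : ℝ) : bern p {true} ≤ ENNReal.ofReal p := by
  rw [bern, PMF.toMeasure_apply_singleton _ _ (measurableSet_singleton _)]
  exact ENNReal.coe_le_coe.mpr (min_le_left _ _)

lemma lmMeasure_forall_eq_true_le (n : ℕ) (p : ℝ) (T : Finset (Triple n)) :
    lmMeasure n p {ω | ∀ t ∈ T, ω t = true} ≤ ENNReal.ofReal p ^ T.card := by
  classical
  have hpi : {ω : Triple n → Bool | ∀ t ∈ T, ω t = true} =
      Set.univ.pi fun t => if t ∈ T then {true} else Set.univ := by
    ext ω
    simp only [Set.mem_ofPred_eq, Set.mem_pi, Set.mem_univ, true_implies]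
    refine forall_congr' fun t => ?_
    split_ifs <;> simp [*]
  rw [lmMeasure, hpi, Measure.pi_pi]
  simp only [apply_ite, measure_univ]
  rw [prod_ite_mem, univ_inter, prod_const]
  exact pow_le_pow_left₀ zero_le (bern_true_le p) _

lemma lmMeasure_not_sparseEM3_le (n m : ℕ) (eps p : ℝ) :
    lmMeasure n p {ω | SparseEM3 eps m (lmComplex n ω)}ᶜ ≤
      ∑ T ∈ denseFaceSets n m (1 / 2 + eps), ENNReal.ofReal p ^ T.card :=
  calc _ ≤ lmMeasure n p
        (⋃ T ∈ denseFaceSets n m (1 / 2 + eps), {ω | ∀ t ∈ T, ω t = true}) :=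
        measure_mono fun ω hω => by
          obtain ⟨T, hT, hωT⟩ := exists_mem_denseFaceSets_of_not_sparseEM3 hω
          exact Set.mem_biUnion hT hωT
    _ ≤ _ := measure_biUnion_finset_le _ _
    _ ≤ _ := sum_le_sum fun T _ => lmMeasure_forall_eq_true_le n p T

lemma tendsto_natCast_pow_mul_ofReal_pow_atTop {p : ℕ → ℝ} {a : ℝ}
    (hp : p =O[atTop] fun n : ℕ => (n : ℝ) ^ (-a)) {d k : ℕ} (hdk : (d : ℝ) < a * k) :
    Tendsto (fun n : ℕ => (n : ℝ≥0∞) ^ d * ENNReal.ofReal (p n) ^ k) atTop (𝓝 0) := by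
  have hO : (fun n : ℕ => (n : ℝ) ^ d * |p n| ^ k) =O[atTop]
      fun n : ℕ => (n : ℝ) ^ (-(a * k - d)) := by
    refine ((Asymptotics.isBigO_refl _ _).mul (hp.norm_left.pow k)).congr' .rfl ?_
    filter_upwards [eventually_gt_atTop 0] with n hn
    have hn : (0 : ℝ) < n := Nat.cast_pos.mpr hn
    rw [← Real.rpow_natCast, ← Real.rpow_natCast, ← Real.rpow_mul hn.le, ← Real.rpow_add hn]
    ring_nf
  have hreal := ENNReal.tendsto_ofReal (hO.trans_tendsto
    ((tendsto_rpow_neg_atTop (by linarith)).comp tendsto_natCast_atTop_atTop))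
  rw [ENNReal.ofReal_zero] at hreal
  refine tendsto_of_tendsto_of_tendsto_of_le_of_le tendsto_const_nhds hreal (fun _ => zero_le)
    fun n => ?_
  rw [ENNReal.ofReal_mul (by positivity), ENNReal.ofReal_pow (abs_nonneg _),
    ENNReal.ofReal_pow (Nat.cast_nonneg _), ENNReal.ofReal_natCast]
  gcongr
  exact le_abs_self _

lemma tendsto_measure_one_of_tendsto_measure_compl {ι : Type*} {l : Filter ι} {Ω : ι → Type*}
    [∀ i, MeasurableSpace (Ω i)] {μ : ∀ i, Measure (Ω i)}
    [∀ i, IsProbabilityMeasure (μ i)]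
    {s : ∀ i, Set (Ω i)} (h : Tendsto (fun i => μ i (s i)ᶜ) l (𝓝 0)) :
    Tendsto (fun i => μ i (s i)) l (𝓝 1) := by
  have hlower := ENNReal.Tendsto.sub tendsto_const_nhds h (Or.inl ENNReal.one_ne_top)
  rw [tsub_zero] at hlower
  refine tendsto_of_tendsto_of_tendsto_of_le_of_le hlower tendsto_const_nhds (fun i => ?_)
    fun i => prob_le_one
  exact tsub_le_iff_right.mpr (measure_univ (μ := μ i) ▸ measure_univ_le_add_compl (s i))

theorem lm_aas_sparse_general
    (m : ℕ) (eps : ℝ)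
    (p : ℕ → ℝ)
    (hp : Asymptotics.IsBigO Filter.atTop p (fun n : ℕ => (n : ℝ) ^ (-(1/2 : ℝ) - eps))) :
    Filter.Tendsto
      (fun n => lmMeasure n (p n)
        {ω : Triple n → Bool | SparseEM3 eps m (lmComplex n ω)})
      Filter.atTop (nhds 1) := by
  rw [← neg_add'] at hp
  have hbound (n : ℕ) := (lmMeasure_not_sparseEM3_le n m eps (p n)).trans
    (sum_denseFaceSets_le n m (1 / 2 + eps) (ENNReal.ofReal (p n)))
  have hterms := tendsto_finsetSum (densePairs m (1 / 2 + eps)) fun b hb =>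
    ENNReal.Tendsto.const_mul
      (tendsto_natCast_pow_mul_ofReal_pow_atTop hp (mem_filter.mp hb).2)
      (Or.inr (ENNReal.pow_ne_top ENNReal.ofNat_ne_top : (2 : ℝ≥0∞) ^ (b.1 + 3) ^ 3 ≠ ⊤))
  simp only [mul_zero, sum_const_zero] at hterms
  exact tendsto_measure_one_of_tendsto_measure_compl
    (tendsto_of_tendsto_of_tendsto_of_le_of_le tendsto_const_nhds hterms (fun _ => zero_le) hbound)

/-- For every `m ∈ ℤ⁺`, every `ε > 0` and every
`p = O(n^{-1/2-ε})`, the Linial–Meshulam random complex `Y(n,p)` is a.a.s.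
`(ε, m, 3)`-sparse. -/
theorem lm_aas_sparse
    (m : ℕ) (hm : 0 < m) (eps : ℝ) (heps : 0 < eps)
    (p : ℕ → ℝ) (hp0 : ∀ n, 0 ≤ p n)
    (hp : Asymptotics.IsBigO Filter.atTop p (fun n : ℕ => (n : ℝ) ^ (-(1/2 : ℝ) - eps))) :
    Filter.Tendsto
      (fun n => lmMeasure n (p n)
        {ω : Triple n → Bool | SparseEM3 eps m (lmComplex n ω)})
      Filter.atTop (nhds 1) :=
  lm_aas_sparse_general m eps p hp
end
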